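/- For any real x and thresholds δ₁ ≥ δ₂ > 0, |x − K_{δ₁}(x)| ≤ |x − K_{δ₂}(x)|, where K_δ(x) = δ·tanh(x/δ). -/

import Mathlib

/-!
`tanh` is concave on `[0, ∞)` and vanishes at `0`, so its secant slope `tanh t / t` decreases in
`t > 0` and stays below `tanh' 0 = 1`. For `x ≥ 0`, `δ * tanh (x / δ) = x * (tanh t / t)` with
`t = x / δ`, hence the truncation increases with `δ` while staying below `x`, and the gap
`x - δ * tanh (x / δ) ≥ 0` shrinks. The gap is odd in `x`, which reduces everything to `x ≥ 0`.
-/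

open Set

namespace Real

theorem hasDerivAt_tanh (x : ℝ) : HasDerivAt tanh (1 / cosh x ^ 2) x := by
  have h : HasDerivAt (fun y => sinh y / cosh y)
      ((cosh x * cosh x - sinh x * sinh x) / cosh x ^ 2) x :=
    (hasDerivAt_sinh x).div (hasDerivAt_cosh x) (cosh_pos x).ne'
  rw [show (fun y => sinh y / cosh y) = tanh from funext fun y => (tanh_eq_sinh_div_cosh y).symm]
    at h
  convert h using 1
  rw [← cosh_sq_sub_sinh_sq x]
  ring

theorem deriv_tanh : deriv tanh = fun x => 1 / cosh x ^ 2 :=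
  funext fun x => (hasDerivAt_tanh x).deriv

theorem differentiable_tanh : Differentiable ℝ tanh :=
  fun x => (hasDerivAt_tanh x).differentiableAt

theorem concaveOn_tanh_Ici : ConcaveOn ℝ (Ici 0) tanh := by
  refine AntitoneOn.concaveOn_of_deriv (convex_Ici 0) differentiable_tanh.continuous.continuousOn
    differentiable_tanh.differentiableOn ?_
  rw [interior_Ici, deriv_tanh]
  intro x hx y hy hxy
  have hcosh : cosh x ≤ cosh y := cosh_le_cosh.2 (by rwa [abs_of_pos hx, abs_of_pos hy])
  dsimp only
  gcongr

theorem tanh_le_self {x : ℝ} (hx : 0 ≤ x) : tanh x ≤ x := by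
  rcases hx.eq_or_lt with rfl | hx
  · simp
  have h := concaveOn_tanh_Ici.slope_le_of_hasDerivAt self_mem_Ici hx.le hx (hasDerivAt_tanh 0)
  rwa [slope_def_field, tanh_zero, cosh_zero, sub_zero, sub_zero, one_pow, div_one,
    div_le_one hx] at h

theorem antitoneOn_tanh_div_self : AntitoneOn (fun t => tanh t / t) (Ioi 0) := by
  intro s hs t ht hst
  have h := concaveOn_tanh_Ici.antitoneOn_slope_gt self_mem_Ici
    ⟨mem_Ici.2 hs.le, hs⟩ ⟨mem_Ici.2 ht.le, ht⟩ hst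
  simpa only [slope_def_field, tanh_zero, sub_zero] using h

end Real

open Real

theorem monotoneOn_mul_tanh_div {x : ℝ} (hx : 0 ≤ x) :
    MonotoneOn (fun δ => δ * tanh (x / δ)) (Ioi 0) := by
  rcases hx.eq_or_lt with rfl | hx
  · simp [monotoneOn_const]
  intro δ hδ δ' hδ' hle
  have hslope : ∀ d : ℝ, 0 < d → d * tanh (x / d) = x * (tanh (x / d) / (x / d)) := by
    intro d hd
    field_simp
  simp only [hslope δ hδ, hslope δ' hδ']
  refine mul_le_mul_of_nonneg_left ?_ hx.le
  exact antitoneOn_tanh_div_self (div_pos hx hδ') (div_pos hx hδ)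
    (div_le_div_of_nonneg_left hx.le hδ hle)

theorem mul_tanh_div_le_self {δ x : ℝ} (hδ : 0 < δ) (hx : 0 ≤ x) : δ * tanh (x / δ) ≤ x := by
  calc δ * tanh (x / δ) ≤ δ * (x / δ) := by gcongr; exact tanh_le_self (by positivity)
    _ = x := mul_div_cancel₀ x hδ.ne'

theorem abs_sub_mul_tanh_div_eq_abs (δ x : ℝ) :
    |x - δ * tanh (x / δ)| = |(|x|) - δ * tanh (|x| / δ)| := by
  rcases abs_choice x with h | h <;> rw [h]
  rw [neg_div, tanh_neg, ← abs_neg]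
  ring_nf

/-- For any real x and thresholds δ₁ ≥ δ₂ > 0,
`|x − K_{δ₁}(x)| ≤ |x − K_{δ₂}(x)|` where `K_δ(x) = δ·tanh(x/δ)`. -/
theorem smooth_truncation_gap_anti_in_threshold (δ₁ δ₂ : ℝ) (hδ₂ : 0 < δ₂) (h : δ₂ ≤ δ₁)
    (x : ℝ) :
    |x - δ₁ * Real.tanh (x / δ₁)| ≤ |x - δ₂ * Real.tanh (x / δ₂)| := by
  have hδ₁ : 0 < δ₁ := hδ₂.trans_le h
  rw [abs_sub_mul_tanh_div_eq_abs δ₁, abs_sub_mul_tanh_div_eq_abs δ₂,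
    abs_of_nonneg (sub_nonneg.2 (mul_tanh_div_le_self hδ₁ (abs_nonneg x))),
    abs_of_nonneg (sub_nonneg.2 (mul_tanh_div_le_self hδ₂ (abs_nonneg x)))]
  linarith [monotoneOn_mul_tanh_div (abs_nonneg x) hδ₂ hδ₁ h]
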